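/- arXiv:2603.27975 — 2 statements merged into one kernel-verified Lean document; each statement's English description precedes it below -/
import Mathlib

section
/- For integers n ≥ c ≥ 4 and 1 ≤ a < c/2, the graph H_{n,c,a} = K_a ∨ (K_{c-2a} ∪ (n-c+a)·K₁) has exactly C(c-a, 2) + (n-c+a)·a edges and, when a ≥ 2, contains no cycle of length ≥ c. -/
/-- `G` contains a cycle of length `ℓ`. -/
def hasCycleLength {V : Type*} (G : SimpleGraph V) (ℓ : ℕ) : Prop :=
  ∃ (u : V) (w : G.Walk u u), w.IsCycle ∧ w.length = ℓ


/-- Kopylov's graph `H_{n,c,a} = K_a ∨ (K_{c-2a} ∪ (n-c+a)·K₁)` on `Fin n`: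
vertices `< a` are joined to everything, vertices in `[a, c-a)` form a clique together
with them, the rest are only joined to the first `a` vertices. -/
def Hgraph (n c a : ℕ) : SimpleGraph (Fin n) where
  Adj u v := u ≠ v ∧ (u.val < a ∨ v.val < a ∨ (u.val < c - a ∧ v.val < c - a))
  symm := ⟨fun u v h => ⟨h.1.symm, by tauto⟩⟩
  loopless := ⟨fun u h => h.1 rfl⟩

/-!
Edge count: the `a` hub vertices `< a` have degree `n - 1`, the vertices of `[a, c - a)` have
degree `c - a - 1` and the remaining `n - c + a` vertices have degree `a`; conclude with the
handshake lemma.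

Cycles: split the vertices of a cycle into the hub `S = [0, a)`, the clique part
`M = [a, c - a)` and the independent part `I = [c - a, n)`. The successor of a vertex of `I`
lies in `S`, so `|I| ≤ |S| ≤ a`. If the cycle meets both `M` and `I` it has to leave `M`, and
it can only do so into `S`; that vertex of `S` has no predecessor in `I`, hence `|I| < |S|`.
Each case bounds the length `|S| + |M| + |I|` below `c`: by `c - a` if `I = ∅`, by `2a` if
`M = ∅`, and by `(c - a) + (a - 1)` otherwise.
-/

open Finset

theorem List.Nodup.countP_le_card_filter {α : Type*} [Fintype α] {l : List α} (hl : l.Nodup)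
    (p : α → Bool) : l.countP p ≤ #{x | p x} := by
  classical
  rw [List.countP_eq_length_filter, ← List.toFinset_card_of_nodup (hl.filter p)]
  exact card_le_card fun x hx ↦ by
    simp only [List.mem_toFinset, List.mem_filter] at hx
    simpa using hx.2

theorem Finset.sum_range_ite_lt_ite_lt {M : Type*} [AddCommMonoid M] {a b n : ℕ} (hab : a ≤ b)
    (hbn : b ≤ n) (x y z : M) :
    ∑ i ∈ range n, (if i < a then x else if i < b then y else z) =
      a • x + (b - a) • y + (n - b) • z := by
  rw [← sum_range_add_sum_Ico _ hbn, ← sum_range_add_sum_Ico _ hab]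
  have hx : ∀ i ∈ range a, (if i < a then x else if i < b then y else z) = x := fun i hi ↦ by
    rw [if_pos (mem_range.1 hi)]
  have hy : ∀ i ∈ Ico a b, (if i < a then x else if i < b then y else z) = y := fun i hi ↦ by
    rw [mem_Ico] at hi; rw [if_neg (by omega), if_pos hi.2]
  have hz : ∀ i ∈ Ico b n, (if i < a then x else if i < b then y else z) = z := fun i hi ↦ by
    rw [mem_Ico] at hi; rw [if_neg (by omega), if_neg (by omega)]
  rw [sum_congr rfl hx, sum_congr rfl hy, sum_congr rfl hz]
  simp only [sum_const, card_range, Nat.card_Ico]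

theorem Nat.two_mul_choose_two (m : ℕ) : 2 * m.choose 2 = m * (m - 1) := by
  rw [Nat.choose_two_right, Nat.mul_div_cancel' (Nat.even_mul_pred_self m).two_dvd]

namespace SimpleGraph.Walk

variable {V : Type*} {G : SimpleGraph V} {u : V}

theorem countP_darts_snd {v : V} (w : G.Walk u v) (p : V → Bool) :
    w.darts.countP (fun d ↦ p d.snd) = w.support.tail.countP p := by
  rw [← map_snd_darts, List.countP_map]; rfl

theorem countP_darts_fst (w : G.Walk u u) (p : V → Bool) :
    w.darts.countP (fun d ↦ p d.fst) = w.support.tail.countP p := by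
  have hsupp : w.support.dropLast ++ [u] = u :: w.support.tail := by
    conv_rhs => rw [cons_tail_support, ← List.dropLast_append_getLast w.support_ne_nil]
    rw [getLast_support]
  have hcount := congrArg (List.countP p) hsupp
  simp only [List.countP_append, List.countP_cons, List.countP_nil] at hcount
  have hfst : w.darts.countP (fun d ↦ p d.fst) = w.support.dropLast.countP p := by
    rw [← map_fst_darts, List.countP_map]; rfl
  omega

theorem countP_support_tail_add_countP_darts (w : G.Walk u u) (p q : V → Prop)
    [DecidablePred p] [DecidablePred q] (hpq : ∀ x y, G.Adj x y → p x → q y) :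
    w.support.tail.countP (p ·) + w.darts.countP (fun d ↦ ¬ p d.fst ∧ q d.snd) =
      w.support.tail.countP (q ·) := by
  rw [← countP_darts_fst, ← countP_darts_snd,
    List.countP_eq_countP_filter_add w.darts (fun d ↦ q d.snd) (fun d ↦ p d.fst),
    List.countP_filter, List.countP_filter]
  congr 1
  · exact List.countP_congr fun d _ ↦ by
      simpa using fun hp ↦ hpq _ _ d.adj hp
  · exact List.countP_congr fun d _ ↦ by simp [Bool.and_comm]

theorem exists_boundary_dart_of_mem_support [DecidableEq V] (w : G.Walk u u) (S : Set V) {x y : V}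
    (hx : x ∈ w.support) (hy : y ∈ w.support) (hxS : x ∈ S) (hyS : y ∉ S) :
    ∃ d ∈ w.darts, d.fst ∈ S ∧ d.snd ∉ S := by
  by_cases hu : u ∈ S
  · obtain ⟨d, hd, h⟩ := (w.takeUntil y hy).exists_boundary_dart S hu hyS
    exact ⟨d, w.darts_takeUntil_subset_darts hy hd, h⟩
  · obtain ⟨d, hd, h⟩ := (w.dropUntil x hx).exists_boundary_dart S hxS hu
    exact ⟨d, w.darts_dropUntil_subset_darts hx hd, h⟩

end SimpleGraph.Walk

instance (n c a : ℕ) : DecidableRel (Hgraph n c a).Adj :=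
  fun u v ↦ inferInstanceAs
    (Decidable (u ≠ v ∧ (u.val < a ∨ v.val < a ∨ (u.val < c - a ∧ v.val < c - a))))

namespace Hgraph

variable {n c a : ℕ}

theorem degree_eq (hac : a ≤ c - a) (hcn : c - a ≤ n) (v : Fin n) :
    (Hgraph n c a).degree v =
      if v.val < a then n - 1 else if v.val < c - a then c - a - 1 else a := by
  rw [← SimpleGraph.card_neighborFinset_eq_degree, SimpleGraph.neighborFinset_eq_filter]
  split_ifs with hva hvc
  · rw [show ({w | (Hgraph n c a).Adj v w} : Finset (Fin n)) = univ.erase v by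
      ext w
      simp only [Hgraph, ne_eq, Fin.ext_iff, mem_filter, mem_univ, true_and, mem_erase, and_true]
      omega]
    rw [card_erase_of_mem (mem_univ v), card_univ, Fintype.card_fin]
  · rw [show ({w | (Hgraph n c a).Adj v w} : Finset (Fin n)) =
        ({w : Fin n | w.val < c - a} : Finset (Fin n)).erase v by
      ext w
      simp only [Hgraph, ne_eq, Fin.ext_iff, mem_filter, mem_univ, true_and, mem_erase]
      omega]
    rw [card_erase_of_mem (by simpa using hvc), Fin.card_filter_val_lt, min_eq_right hcn]
  · rw [show ({w | (Hgraph n c a).Adj v w} : Finset (Fin n)) =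
        ({w : Fin n | w.val < a} : Finset (Fin n)) by
      ext w
      simp only [Hgraph, ne_eq, Fin.ext_iff, mem_filter, mem_univ, true_and]
      omega]
    rw [Fin.card_filter_val_lt, min_eq_right (by omega)]

theorem ncard_edgeSet (hac : 2 * a < c) (hcn : c ≤ n) :
    (Hgraph n c a).edgeSet.ncard = (c - a).choose 2 + (n - c + a) * a := by
  have hsum := (Hgraph n c a).sum_degrees_eq_twice_card_edges
  simp only [degree_eq (by omega : a ≤ c - a) (by omega : c - a ≤ n)] at hsum
  rw [Fin.sum_univ_eq_sum_range
      (fun i ↦ if i < a then n - 1 else if i < c - a then c - a - 1 else a),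
    sum_range_ite_lt_ite_lt (by omega) (by omega), smul_eq_mul, smul_eq_mul, smul_eq_mul] at hsum
  rw [← SimpleGraph.coe_edgeFinset, Set.ncard_coe_finset]
  have hchoose := Nat.two_mul_choose_two (c - a)
  zify [(by omega : a ≤ c), (by omega : 1 ≤ n), (by omega : 1 ≤ c - a), (by omega : a ≤ c - a),
    (by omega : c - a ≤ n), hcn] at hsum hchoose ⊢
  linarith

theorem not_hasCycleLength {ℓ : ℕ} (ha : 0 < a) (hac : 2 * a < c) (hℓ : c ≤ ℓ) :
    ¬ hasCycleLength (Hgraph n c a) ℓ := by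
  rintro ⟨u, w, hw, rfl⟩
  have hIS :=
    w.countP_support_tail_add_countP_darts (fun v ↦ c - a ≤ v.val) (fun v ↦ v.val < a)
      fun x y hxy hx ↦ by obtain ⟨-, h | h | h⟩ := hxy <;> omega
  set T := w.support.tail
  have hT : T.Nodup := hw.support_nodup
  have hlen :
      w.length = T.countP (fun v ↦ v.val < c - a) + T.countP (fun v ↦ c - a ≤ v.val) := by
    rw [show w.length = T.length by simp [T],
      List.length_eq_countP_add_countP (fun v ↦ v.val < c - a)]
    congr 1
    exact List.countP_congr fun v _ ↦ by simp
  have hK : T.countP (fun v ↦ v.val < c - a) ≤ c - a :=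
    (hT.countP_le_card_filter _).trans (by simp [Fin.card_filter_val_lt])
  have hS : T.countP (fun v ↦ v.val < a) ≤ a :=
    (hT.countP_le_card_filter _).trans (by simp [Fin.card_filter_val_lt])
  rcases Nat.eq_zero_or_pos (T.countP fun v ↦ c - a ≤ v.val) with hI | hI
  · omega
  obtain ⟨i, hiT, hi⟩ := List.countP_pos_iff.mp hI
  by_cases hM : ∃ m ∈ T, a ≤ m.val ∧ m.val < c - a
  · obtain ⟨m, hmT, hm⟩ := hM
    obtain ⟨d, hd, hdfst, hdsnd⟩ :=
      w.exists_boundary_dart_of_mem_support {v | a ≤ v.val ∧ v.val < c - a}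
        (List.mem_of_mem_tail hmT) (List.mem_of_mem_tail hiT) hm
        (by simp only [Set.mem_ofPred_eq, decide_eq_true_eq] at hi ⊢; omega)
    have hleave : 0 < w.darts.countP (fun d ↦ ¬ c - a ≤ d.fst.val ∧ d.snd.val < a) :=
      List.countP_pos_iff.mpr ⟨d, hd, by
        simp only [Set.mem_ofPred_eq, decide_eq_true_eq] at hdfst hdsnd ⊢
        obtain ⟨-, h | h | h⟩ := d.adj <;> omega⟩
    omega
  · push Not at hM
    have hKS : T.countP (fun v ↦ v.val < c - a) = T.countP (fun v ↦ v.val < a) :=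
      List.countP_congr fun v hv ↦ by have := hM v hv; simp only [decide_eq_true_eq]; omega
    omega

end Hgraph

theorem stmt9_general (n c a : ℕ) (h2 : c ≤ n) (h4 : 2 * a < c) :
    (Hgraph n c a).edgeSet.ncard = (c - a).choose 2 + (n - c + a) * a ∧
    (2 ≤ a → ∀ ℓ : ℕ, c ≤ ℓ → ¬ hasCycleLength (Hgraph n c a) ℓ) :=
  ⟨Hgraph.ncard_edgeSet h4 h2, fun ha _ hℓ ↦ Hgraph.not_hasCycleLength (by omega) h4 hℓ⟩

/-- For `n ≥ c ≥ 4` and `1 ≤ a < c/2`, the graph `H_{n,c,a}` has exactly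
`C(c-a,2) + (n-c+a)·a` edges and, when `a ≥ 2`, no cycle of length `≥ c`. -/
theorem stmt9 (n c a : ℕ) (h1 : 4 ≤ c) (h2 : c ≤ n) (h3 : 1 ≤ a) (h4 : 2 * a < c) :
    (Hgraph n c a).edgeSet.ncard = (c - a).choose 2 + (n - c + a) * a ∧
    (2 ≤ a → ∀ ℓ : ℕ, c ≤ ℓ → ¬ hasCycleLength (Hgraph n c a) ℓ) :=
  stmt9_general n c a h2 h4
end

section
/- Let k ≥ 2 and k+2 ≤ n ≤ 2k+1. The graph K₁ ∨ (K_k ∪ K_{n-k-1}) has exactly C(k+1,2) + C(n-k,2) edges and contains no cycle of length k+2 or longer; in particular it does not contain k admissible cycles. -/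
/-- `G` contains `k` admissible cycles: cycles whose lengths form an arithmetic
progression of length `k` with common difference 1 or 2. -/
def hasKAdmissibleCycles {V : Type*} (G : SimpleGraph V) (k : ℕ) : Prop :=
  ∃ ℓ d : ℕ, (d = 1 ∨ d = 2) ∧ ∀ i < k, hasCycleLength G (ℓ + i * d)


/-- The graph `K₁ ∨ (K_k ∪ K_{n-k-1})` on `Fin n`: vertex `0` is joined to everything,
vertices `1,…,k` form a clique, vertices `k+1,…,n-1` form a clique. -/
def jointCliques (n k : ℕ) : SimpleGraph (Fin n) where
  Adj u v := u ≠ v ∧ (u.val = 0 ∨ v.val = 0 ∨ (u.val ≤ k ∧ v.val ≤ k) ∨ (k < u.val ∧ k < v.val))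
  symm := ⟨fun u v h => ⟨h.1.symm, by tauto⟩⟩
  loopless := ⟨fun u h => h.1 rfl⟩

open Finset

namespace SimpleGraph

variable {V : Type*} {G : SimpleGraph V} {A B : Finset V}

def twoCliques (A B : Finset V) : SimpleGraph V where
  Adj u v := u ≠ v ∧ (u ∈ A ∧ v ∈ A ∨ u ∈ B ∧ v ∈ B)
  symm := ⟨fun _ _ h => ⟨h.1.symm, h.2.imp And.symm And.symm⟩⟩
  loopless := ⟨fun _ h => h.1 rfl⟩

lemma edgeSet_twoCliques [DecidableEq V] : (twoCliques A B).edgeSet =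
    ↑(A.offDiag.image Sym2.mk.uncurry ∪ B.offDiag.image Sym2.mk.uncurry) := by
  ext e
  induction e using Sym2.ind with
  | h u v =>
    simp only [mem_edgeSet, twoCliques, coe_union, coe_image, Set.mem_union, Set.mem_image,
      mem_coe, mem_offDiag, Prod.exists, Function.uncurry_apply_pair, Sym2.eq_iff]
    aesop

lemma ncard_edgeSet_twoCliques [DecidableEq V] (hAB : #(A ∩ B) ≤ 1) :
    (twoCliques A B).edgeSet.ncard = (#A).choose 2 + (#B).choose 2 := by
  rw [edgeSet_twoCliques, Set.ncard_coe_finset, card_union_of_disjoint,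
    Sym2.card_image_offDiag, Sym2.card_image_offDiag]
  simp only [Finset.disjoint_left, mem_image, mem_offDiag, not_exists, not_and, Prod.exists]
  rintro _ ⟨u, v, ⟨hu, hv, huv⟩, rfl⟩ x y ⟨hx, hy, -⟩ hxy
  obtain ⟨rfl, rfl⟩ | ⟨rfl, rfl⟩ := Sym2.eq_iff.mp hxy <;>
    exact huv (card_le_one.mp hAB _ (by simp [*]) _ (by simp [*]))

lemma Walk.IsPath.support_subset_left (hG : ∀ ⦃u v⦄, G.Adj u v → u ∈ A ∧ v ∈ A ∨ u ∈ B ∧ v ∈ B)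
    {x y : V} {p : G.Walk x y} (hp : p.IsPath) (hx : x ∈ A)
    (hAB : ∀ v ∈ p.support, v ∈ A → v ∈ B → v = y) : ∀ v ∈ p.support, v ∈ A := by
  induction p with
  | nil => simpa
  | @cons x x' y h q ih =>
    rw [cons_isPath_iff] at hp
    have hxB : x ∉ B := fun hxB =>
      hp.2 (hAB x (start_mem_support _) hx hxB ▸ q.end_mem_support)
    have hx' : x' ∈ A := ((hG h).resolve_right fun h' => hxB h'.1).2
    have := ih hp.1 hx' fun v hv => hAB v (by simp [hv])
    simpa [hx]

lemma Walk.IsCycle.support_subset_or (hG : ∀ ⦃u v⦄, G.Adj u v → u ∈ A ∧ v ∈ A ∨ u ∈ B ∧ v ∈ B)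
    {y : V} {c : G.Walk y y} (hc : c.IsCycle) (hAB : ∀ v ∈ c.support, v ∈ A → v ∈ B → v = y) :
    (∀ v ∈ c.support, v ∈ A) ∨ (∀ v ∈ c.support, v ∈ B) := by
  have hsupp : c.support = y :: c.tail.support := (cons_support_tail hc.not_nil).symm
  have hAB' : ∀ v ∈ c.tail.support, v ∈ A → v ∈ B → v = y := fun v hv =>
    hAB v (hsupp ▸ List.mem_cons_of_mem y hv)
  have hyq : y ∈ c.tail.support := c.tail.end_mem_support
  rw [hsupp]
  rcases hG (c.adj_snd hc.not_nil) with ⟨-, hA⟩ | ⟨-, hB⟩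
  · have := hc.isPath_tail.support_subset_left hG hA hAB'
    exact .inl <| by simpa [this y hyq]
  · have := hc.isPath_tail.support_subset_left (fun _ _ h => (hG h).symm) hB
      fun v hv hB hA => hAB' v hv hA hB
    exact .inr <| by simpa [this y hyq]

lemma Walk.IsCycle.length_le_card [DecidableEq V] {u : V} {c : G.Walk u u} (hc : c.IsCycle)
    {T : Finset V} (hT : ∀ v ∈ c.support, v ∈ T) : c.length ≤ #T :=
  calc c.length = c.support.tail.length := by simp
    _ = #c.support.tail.toFinset := (List.toFinset_card_of_nodup hc.support_nodup).symm
    _ ≤ #T := card_le_card fun v hv => hT v (List.mem_of_mem_tail (List.mem_toFinset.mp hv))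

lemma Walk.IsCycle.length_le_max_card [DecidableEq V]
    (hG : ∀ ⦃u v⦄, G.Adj u v → u ∈ A ∧ v ∈ A ∨ u ∈ B ∧ v ∈ B) (hAB : #(A ∩ B) ≤ 1)
    {u : V} {c : G.Walk u u} (hc : c.IsCycle) : c.length ≤ max #A #B := by
  obtain ⟨y, c', hc', hlen, hAB'⟩ : ∃ (y : V) (c' : G.Walk y y), c'.IsCycle ∧
      c'.length = c.length ∧ ∀ v ∈ c'.support, v ∈ A → v ∈ B → v = y := by
    by_cases hz : ∃ z ∈ c.support, z ∈ A ∩ B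
    · obtain ⟨z, hz, hzAB⟩ := hz
      exact ⟨z, c.rotate z hz, hc.rotate hz, length_rotate .., fun v _ hA hB =>
        card_le_one.mp hAB v (mem_inter.mpr ⟨hA, hB⟩) z hzAB⟩
    · exact ⟨u, c, hc, rfl, fun v hv hA hB => (hz ⟨v, hv, mem_inter.mpr ⟨hA, hB⟩⟩).elim⟩
  rw [← hlen]
  rcases hc'.support_subset_or hG hAB' with hA | hB
  · exact (hc'.length_le_card hA).trans (le_max_left ..)
  · exact (hc'.length_le_card hB).trans (le_max_right ..)

end SimpleGraph

open SimpleGraph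

lemma exists_cycle_length_ge_of_hasKAdmissibleCycles {V : Type*} {G : SimpleGraph V} {k : ℕ}
    (hk : 1 ≤ k) (h : hasKAdmissibleCycles G k) : ∃ ℓ, k + 2 ≤ ℓ ∧ hasCycleLength G ℓ := by
  obtain ⟨ℓ, d, hd, hcycles⟩ := h
  obtain ⟨_, c, hc, hlen⟩ := hcycles 0 (by omega)
  have := hc.three_le_length
  exact ⟨_, by rcases hd with rfl | rfl <;> omega, hcycles (k - 1) (by omega)⟩

lemma jointCliques_eq_twoCliques {n k : ℕ} (h : k < n) :
    jointCliques n k = twoCliques (Iic ⟨k, h⟩) (insert ⟨0, by omega⟩ (Ioi ⟨k, h⟩)) := by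
  ext u v
  simp only [jointCliques, twoCliques, mem_Iic, mem_insert, mem_Ioi, Fin.le_def, Fin.lt_def,
    Fin.ext_iff]
  omega

/-- For `k ≥ 2` and `k + 2 ≤ n ≤ 2k + 1`, the graph `K₁ ∨ (K_k ∪ K_{n-k-1})` has
exactly `C(k+1,2) + C(n-k,2)` edges, contains no cycle of length `≥ k + 2`, and in
particular contains no `k` admissible cycles. -/
theorem stmt11 (k n : ℕ) (hk : 2 ≤ k) (h1 : k + 2 ≤ n) (h2 : n ≤ 2 * k + 1) :
    (jointCliques n k).edgeSet.ncard = (k + 1).choose 2 + (n - k).choose 2 ∧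
    (∀ ℓ : ℕ, k + 2 ≤ ℓ → ¬ hasCycleLength (jointCliques n k) ℓ) ∧
    ¬ hasKAdmissibleCycles (jointCliques n k) k := by
  have hkn : k < n := by omega
  have hG := jointCliques_eq_twoCliques hkn
  set A : Finset (Fin n) := Iic ⟨k, hkn⟩
  set B : Finset (Fin n) := insert ⟨0, by omega⟩ (Ioi ⟨k, hkn⟩)
  have hA : #A = k + 1 := Fin.card_Iic _
  have hB : #B = n - k := by
    rw [card_insert_of_notMem (by simp [Fin.lt_def]), Fin.card_Ioi]
    dsimp only
    omega
  have hAB : #(A ∩ B) ≤ 1 := card_le_one.mpr fun u hu v hv => by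
    simp only [A, B, mem_inter, mem_Iic, mem_insert, mem_Ioi, Fin.le_def, Fin.lt_def,
      Fin.ext_iff] at hu hv ⊢
    omega
  have hcycle : ∀ ℓ : ℕ, k + 2 ≤ ℓ → ¬ hasCycleLength (jointCliques n k) ℓ := by
    rintro ℓ hℓ ⟨u, c, hc, rfl⟩
    have := hc.length_le_max_card (fun u v h => (hG ▸ h : (twoCliques A B).Adj u v).2) hAB
    omega
  refine ⟨?_, hcycle, fun h => ?_⟩
  · rw [hG, ncard_edgeSet_twoCliques hAB, hA, hB]
  · obtain ⟨ℓ, hℓ, hcyc⟩ := exists_cycle_length_ge_of_hasKAdmissibleCycles (by omega) h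
    exact hcycle ℓ hℓ hcyc
end
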